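/- arXiv:2512.03242 — 9 statements merged into one kernel-verified Lean document; each statement's English description precedes it below -/
import Mathlib

section
/- Let λ be a positive random variable with Var(λ) > 0 and finite second moment, ε ~ N(0, σ²) independent of λ, and λ̂ = λ·e^ε. Then the Pearson correlation between λ̂ and λ equals e^{−σ²/2} / sqrt((1 + CV⁻²) − CV⁻²·e^{−σ²}), where CV = sqrt(Var(λ))/E[λ]. -/
open MeasureTheory ProbabilityTheory Real

/-! By independence every moment of `λ̂ = λ·e^ε` factors into a moment of `λ` times the Gaussian
moment generating function `M(t) = e^{σ²t²/2}`: `Cov(λ̂, λ) = Var(λ)·M(1)` and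
`Var(λ̂) = E[λ²]·M(2) - (E[λ]·M(1))²`. The formula for the correlation is then algebra. -/

namespace ProbabilityTheory.IndepFun

variable {Ω : Type*} [MeasurableSpace Ω] {μ : Measure Ω} {X Y : Ω → ℝ}

theorem integral_pow_mul_exp (h : IndepFun X Y μ)
    (hX : AEMeasurable X μ) (hY : AEMeasurable Y μ) (n : ℕ) (t : ℝ) :
    ∫ ω, X ω ^ n * exp (t * Y ω) ∂μ = (∫ ω, X ω ^ n ∂μ) * mgf Y μ t :=
  (h.comp (measurable_id.pow_const n) (measurable_const_mul t).exp).integral_mul_eq_mul_integral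
    (hX.pow_const n).aestronglyMeasurable (hY.const_mul t).exp.aestronglyMeasurable

variable [IsProbabilityMeasure μ]

theorem integral_mul_exp_mul_sub (h : IndepFun X Y μ) (hX : MemLp X 2 μ)
    (hY : AEMeasurable Y μ) :
    (∫ ω, X ω * exp (Y ω) * X ω ∂μ) - (∫ ω, X ω * exp (Y ω) ∂μ) * (∫ ω, X ω ∂μ)
      = variance X μ * mgf Y μ 1 := by
  have h1 := h.integral_pow_mul_exp hX.aemeasurable hY 1 1
  have h2 := h.integral_pow_mul_exp hX.aemeasurable hY 2 1
  simp only [one_mul, pow_one] at h1 h2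
  have hsq : ∫ ω, X ω * exp (Y ω) * X ω ∂μ = ∫ ω, X ω ^ 2 * exp (Y ω) ∂μ := by
    congr with ω; ring
  rw [hsq, h1, h2, variance_eq_sub hX]
  simp only [Pi.pow_apply]
  ring

theorem variance_mul_exp (h : IndepFun X Y μ) (hX : MemLp X 2 μ) (hY : AEMeasurable Y μ)
    (hY₂ : Integrable (fun ω => exp (2 * Y ω)) μ) :
    variance (fun ω => X ω * exp (Y ω)) μ
      = (variance X μ + (∫ ω, X ω ∂μ) ^ 2) * mgf Y μ 2 - ((∫ ω, X ω ∂μ) * mgf Y μ 1) ^ 2 := by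
  have hsq : ∀ ω, (X ω * exp (Y ω)) ^ 2 = X ω ^ 2 * exp (2 * Y ω) := fun ω => by
    rw [mul_pow, ← exp_nat_mul]; norm_num
  have hmem : MemLp (fun ω => X ω * exp (Y ω)) 2 μ :=
    (memLp_two_iff_integrable_sq (hX.aemeasurable.mul hY.exp).aestronglyMeasurable).mpr <|
      ((h.comp (measurable_id.pow_const 2) (measurable_const_mul 2).exp).integrable_mul
        hX.integrable_sq hY₂).congr (.of_forall fun ω => (hsq ω).symm)
  have h1 := h.integral_pow_mul_exp hX.aemeasurable hY 1 1
  have h2 := h.integral_pow_mul_exp hX.aemeasurable hY 2 2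
  simp only [one_mul, pow_one] at h1
  rw [variance_eq_sub hmem, variance_eq_sub hX]
  simp only [Pi.pow_apply, hsq, h1, h2]
  ring

end ProbabilityTheory.IndepFun

theorem mul_exp_half_div_sqrt_eq (V m v : ℝ) (hV : 0 < V) (hv : 0 ≤ v) :
    V * exp (v / 2) / (sqrt ((V + m ^ 2) * exp (2 * v) - (m * exp (v / 2)) ^ 2) * sqrt V)
      = exp (-v / 2) / sqrt ((1 + (V / m ^ 2)⁻¹) - (V / m ^ 2)⁻¹ * exp (-v)) := by
  -- both sides equal `√V / √W` with `W = (V + m²)·e^v - m²`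
  set a := exp (v / 2)
  have ha : 0 < a := exp_pos _
  have hexp : exp v = a ^ 2 := by rw [← exp_nat_mul]; congr 1; ring
  have hexp2 : exp (2 * v) = a ^ 4 := by rw [← exp_nat_mul]; congr 1; ring
  have hexpneg : exp (-v) = (a ^ 2)⁻¹ := by rw [exp_neg, hexp]
  have hexpneg2 : exp (-v / 2) = a⁻¹ := by rw [neg_div, exp_neg]
  set W := (V + m ^ 2) * a ^ 2 - m ^ 2
  have ha1 : 1 ≤ a ^ 2 := hexp ▸ one_le_exp hv
  have hW : 0 < W := by nlinarith [sq_nonneg m]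
  have hL : (V + m ^ 2) * a ^ 4 - (m * a) ^ 2 = a ^ 2 * W := by ring
  have hR : (1 + (V / m ^ 2)⁻¹) - (V / m ^ 2)⁻¹ * (a ^ 2)⁻¹ = W / (V * a ^ 2) := by
    rw [inv_div]; field_simp; ring
  rw [hexp2, hexpneg, hexpneg2, hL, hR, sqrt_mul (by positivity), sqrt_div hW.le,
    sqrt_mul hV.le, sqrt_sq ha.le]
  have hsV : 0 < sqrt V := sqrt_pos.mpr hV
  have hsW : 0 < sqrt W := sqrt_pos.mpr hW
  field_simp
  rw [sq_sqrt hV.le]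

theorem corr_lambdaHat_lambda_general
    {Ω : Type*} [MeasurableSpace Ω] (μ : Measure Ω) [IsProbabilityMeasure μ]
    (lam ε : Ω → ℝ) (v : NNReal)
    (hlam_meas : Measurable lam) (hε_meas : Measurable ε)
    (hlam_sq : Integrable (fun ω => (lam ω) ^ 2) μ)
    (hvar_pos : 0 < variance lam μ)
    (hε_law : Measure.map ε μ = gaussianReal 0 v)
    (hindep : IndepFun lam ε μ)
    (lamHat : Ω → ℝ) (hlamHat : lamHat = fun ω => lam ω * Real.exp (ε ω))
    (CV : ℝ) (hCV : CV = Real.sqrt (variance lam μ) / (∫ ω, lam ω ∂μ)) :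
    ((∫ ω, lamHat ω * lam ω ∂μ) - (∫ ω, lamHat ω ∂μ) * (∫ ω, lam ω ∂μ))
        / (Real.sqrt (variance lamHat μ) * Real.sqrt (variance lam μ))
      = Real.exp (-(v : ℝ) / 2)
        / Real.sqrt ((1 + (CV ^ 2)⁻¹) - (CV ^ 2)⁻¹ * Real.exp (-(v : ℝ))) := by
  subst hlamHat hCV
  have hmgf₁ : mgf ε μ 1 = exp (v / 2) := by simpa using mgf_gaussianReal hε_law 1
  have hmgf₂ : mgf ε μ 2 = exp (2 * v) := by
    rw [mgf_gaussianReal hε_law 2]; congr 1; ring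
  have hlam : MemLp lam 2 μ :=
    (memLp_two_iff_integrable_sq hlam_meas.aestronglyMeasurable).mpr hlam_sq
  have hexp₂ : Integrable (fun ω => exp (2 * ε ω)) μ := by
    rw [← mgf_pos_iff, hmgf₂]
    exact exp_pos _
  rw [hindep.integral_mul_exp_mul_sub hlam hε_meas.aemeasurable,
    hindep.variance_mul_exp hlam hε_meas.aemeasurable hexp₂, div_pow, sq_sqrt hvar_pos.le,
    hmgf₁, hmgf₂]
  exact mul_exp_half_div_sqrt_eq _ _ _ hvar_pos v.coe_nonneg

/-- The Pearson correlation between predicted losses `λ̂ = λ·e^ε` and actual losses `λ`,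
with `ε ~ N(0, σ²)` independent of `λ`, equals
`e^{−σ²/2} / sqrt((1 + CV⁻²) − CV⁻²·e^{−σ²})` where `CV = sqrt(Var λ)/E[λ]`. -/
theorem corr_lambdaHat_lambda
    {Ω : Type*} [MeasurableSpace Ω] (μ : Measure Ω) [IsProbabilityMeasure μ]
    (lam ε : Ω → ℝ) (v : NNReal)
    (hlam_meas : Measurable lam) (hε_meas : Measurable ε)
    (hlam_pos : ∀ᵐ ω ∂μ, 0 < lam ω)
    (hlam_sq : Integrable (fun ω => (lam ω) ^ 2) μ)
    (hvar_pos : 0 < variance lam μ)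
    (hε_law : Measure.map ε μ = gaussianReal 0 v)
    (hindep : IndepFun lam ε μ)
    (lamHat : Ω → ℝ) (hlamHat : lamHat = fun ω => lam ω * Real.exp (ε ω))
    (CV : ℝ) (hCV : CV = Real.sqrt (variance lam μ) / (∫ ω, lam ω ∂μ)) :
    ((∫ ω, lamHat ω * lam ω ∂μ) - (∫ ω, lamHat ω ∂μ) * (∫ ω, lam ω ∂μ))
        / (Real.sqrt (variance lamHat μ) * Real.sqrt (variance lam μ))
      = Real.exp (-(v : ℝ) / 2)
        / Real.sqrt ((1 + (CV ^ 2)⁻¹) - (CV ^ 2)⁻¹ * Real.exp (-(v : ℝ))) :=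
  corr_lambdaHat_lambda_general μ lam ε v hlam_meas hε_meas hlam_sq hvar_pos hε_law hindep lamHat
    hlamHat CV hCV
end

section
/- Let λ be a positive random variable with E[λ^{1−η}] finite, ε ~ N(0, σ²) independent of λ, λ̂ = λ·e^ε, price p = M·λ̂ with M > 0, and conversion c(p) = K·p^{−η} with K, η > 0. Then E[λ·c(p)] / E[p·c(p)] = (1/M)·exp(σ²(2η−1)/2). -/
/-!
Write `p = M λ e^ε`. For `λ > 0` both `λ c(p)` and `p c(p)` factor as a constant times
`λ^{1-η} e^{tε}`, with `t = -η` and `t = 1 - η` respectively. By independence each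
expectation is `E[λ^{1-η}] · E[e^{tε}] = E[λ^{1-η}] e^{σ²t²/2}`, so `E[λ^{1-η}]` and `K`
cancel in the ratio, leaving `M^{-η}/M^{1-η} = 1/M` and `e^{σ²(η² - (1-η)²)/2} = e^{σ²(2η-1)/2}`.
-/

open MeasureTheory ProbabilityTheory

lemma Real.self_mul_rpow_neg {x : ℝ} (hx : 0 < x) (y : ℝ) : x * x ^ (-y) = x ^ (1 - y) := by
  rw [sub_eq_add_neg, Real.rpow_add hx, Real.rpow_one]

lemma Real.mul_mul_exp_rpow {M x : ℝ} (hM : 0 < M) (hx : 0 < x) (e s : ℝ) :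
    (M * (x * Real.exp e)) ^ s = M ^ s * (x ^ s * Real.exp (s * e)) := by
  rw [Real.mul_rpow hM.le (by positivity), Real.mul_rpow hx.le (Real.exp_pos e).le,
    ← Real.exp_mul, mul_comm e s]

lemma Real.mul_mul_mul_exp_rpow_neg {M x : ℝ} (hM : 0 < M) (hx : 0 < x) (K e η : ℝ) :
    x * (K * (M * (x * Real.exp e)) ^ (-η))
      = K * M ^ (-η) * (x ^ (1 - η) * Real.exp (-η * e)) := by
  rw [Real.mul_mul_exp_rpow hM hx, ← Real.self_mul_rpow_neg hx]
  ring

lemma Real.mul_mul_exp_mul_mul_rpow_neg {M x : ℝ} (hM : 0 < M) (hx : 0 < x) (K e η : ℝ) :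
    M * (x * Real.exp e) * (K * (M * (x * Real.exp e)) ^ (-η))
      = K * M ^ (1 - η) * (x ^ (1 - η) * Real.exp ((1 - η) * e)) := by
  rw [mul_left_comm, Real.self_mul_rpow_neg (by positivity), Real.mul_mul_exp_rpow hM hx]
  ring

lemma integral_mul_exp_mul_of_indepFun_gaussianReal {Ω : Type*} [MeasurableSpace Ω]
    {μ : Measure Ω} {X Y : Ω → ℝ} {m : ℝ} {v : NNReal} (hXY : IndepFun X Y μ)
    (hX : AEStronglyMeasurable X μ) (hY : μ.map Y = gaussianReal m v) (t : ℝ) :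
    ∫ ω, X ω * Real.exp (t * Y ω) ∂μ
      = (∫ ω, X ω ∂μ) * Real.exp (m * t + v * t ^ 2 / 2) := by
  have hexp : Measurable fun y : ℝ => Real.exp (t * y) := by fun_prop
  have hY_meas : AEMeasurable Y μ := aemeasurable_of_map_neZero (by rw [hY]; infer_instance)
  have hind : IndepFun X (fun ω => Real.exp (t * Y ω)) μ := hXY.comp measurable_id hexp
  rw [hind.integral_fun_mul_eq_mul_integral hX
    (hexp.comp_aemeasurable hY_meas).aestronglyMeasurable, ← mgf_gaussianReal hY t, mgf]

theorem loss_ratio_exp_formula_general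
    {Ω : Type*} [MeasurableSpace Ω] (μ : Measure Ω) [IsProbabilityMeasure μ]
    (lam ε : Ω → ℝ) (v : NNReal) (M K η : ℝ)
    (hM : 0 < M) (hK : 0 < K)
    (hlam_pos : ∀ᵐ ω ∂μ, 0 < lam ω)
    (hmom : Integrable (fun ω => lam ω ^ (1 - η)) μ)
    (hmom_pos : 0 < ∫ ω, lam ω ^ (1 - η) ∂μ)
    (hε_law : Measure.map ε μ = gaussianReal 0 v)
    (hindep : IndepFun lam ε μ)
    (lamHat p : Ω → ℝ)
    (hlamHat : lamHat = fun ω => lam ω * Real.exp (ε ω))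
    (hp : p = fun ω => M * lamHat ω) :
    (∫ ω, lam ω * (K * p ω ^ (-η)) ∂μ) / (∫ ω, p ω * (K * p ω ^ (-η)) ∂μ)
      = (1 / M) * Real.exp ((v : ℝ) * (2 * η - 1) / 2) := by
  subst hp hlamHat
  have hnum : (fun ω => lam ω * (K * (M * (lam ω * Real.exp (ε ω))) ^ (-η)))
      =ᵐ[μ] fun ω => K * M ^ (-η) * (lam ω ^ (1 - η) * Real.exp (-η * ε ω)) := by
    filter_upwards [hlam_pos] with ω hω using Real.mul_mul_mul_exp_rpow_neg hM hω K (ε ω) η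
  have hden :
      (fun ω => M * (lam ω * Real.exp (ε ω)) * (K * (M * (lam ω * Real.exp (ε ω))) ^ (-η)))
        =ᵐ[μ] fun ω => K * M ^ (1 - η) * (lam ω ^ (1 - η) * Real.exp ((1 - η) * ε ω)) := by
    filter_upwards [hlam_pos] with ω hω
      using Real.mul_mul_exp_mul_mul_rpow_neg hM hω K (ε ω) η
  have hmoment (t : ℝ) : ∫ ω, lam ω ^ (1 - η) * Real.exp (t * ε ω) ∂μ
      = (∫ ω, lam ω ^ (1 - η) ∂μ) * Real.exp (0 * t + v * t ^ 2 / 2) :=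
    integral_mul_exp_mul_of_indepFun_gaussianReal
      (hindep.comp (measurable_id.pow_const (1 - η)) measurable_id) hmom.aestronglyMeasurable
      hε_law t
  rw [integral_congr_ae hnum, integral_congr_ae hden, integral_const_mul, integral_const_mul,
    hmoment, hmoment, div_eq_iff (by positivity)]
  have hM_pow : M ^ (-η) = 1 / M * M ^ (1 - η) := by
    rw [one_div, ← Real.rpow_neg_one, ← Real.rpow_add hM]
    ring_nf
  have hexp_split : Real.exp (0 * -η + v * (-η) ^ 2 / 2)
      = Real.exp (v * (2 * η - 1) / 2) * Real.exp (0 * (1 - η) + v * (1 - η) ^ 2 / 2) := by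
    rw [← Real.exp_add]
    ring_nf
  rw [hM_pow, hexp_split]
  ring

/-- Under lognormal multiplicative error, cost-plus pricing `p = M·λ̂` and power-law demand
`c(p) = K·p^{−η}`, the expected loss ratio numerator/denominator satisfies
`E[λ·c(p)] / E[p·c(p)] = (1/M)·exp(σ²(2η−1)/2)`. -/
theorem loss_ratio_exp_formula
    {Ω : Type*} [MeasurableSpace Ω] (μ : Measure Ω) [IsProbabilityMeasure μ]
    (lam ε : Ω → ℝ) (v : NNReal) (M K η : ℝ)
    (hM : 0 < M) (hK : 0 < K) (hη : 0 < η)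
    (hlam_meas : Measurable lam) (hε_meas : Measurable ε)
    (hlam_pos : ∀ᵐ ω ∂μ, 0 < lam ω)
    (hmom : Integrable (fun ω => lam ω ^ (1 - η)) μ)
    (hmom_pos : 0 < ∫ ω, lam ω ^ (1 - η) ∂μ)
    (hε_law : Measure.map ε μ = gaussianReal 0 v)
    (hindep : IndepFun lam ε μ)
    (lamHat p : Ω → ℝ)
    (hlamHat : lamHat = fun ω => lam ω * Real.exp (ε ω))
    (hp : p = fun ω => M * lamHat ω) :
    (∫ ω, lam ω * (K * p ω ^ (-η)) ∂μ) / (∫ ω, p ω * (K * p ω ^ (-η)) ∂μ)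
      = (1 / M) * Real.exp ((v : ℝ) * (2 * η - 1) / 2) :=
  loss_ratio_exp_formula_general μ lam ε v M K η hM hK hlam_pos hmom hmom_pos hε_law hindep lamHat p
    hlamHat hp
end

section
/- Under the lognormal-error pricing model with margin M > 0, elasticity η > 0, model correlation ρ ∈ (0,1], and coefficient of variation CV > 0, the expected loss ratio satisfies LR = (1/M)·((1 + ρ²·CV⁻²)/(ρ²·(1 + CV⁻²)))^{(2η−1)/2}. -/
/-!
If `ε ~ N(0, σ²)` is independent of `λ`, every moment in the statement factors as
`E[f(λ) e^{tε}] = E[f(λ)] e^{σ²t²/2}`. Hence `Cov(λ̂, λ) = Var(λ) e^{σ²/2}` and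
`Var λ̂ = E[λ²] e^{2σ²} - E[λ]² e^{σ²}`, which can be solved for
`e^{σ²} = (1 + ρ²CV⁻²)/(ρ²(1 + CV⁻²))`. With `p = Mλ̂`, both `E[λ c(p)]` and `E[p c(p)]` are
multiples of `E[λ^{1-η}]`, carrying the Gaussian factors `e^{σ²η²/2}` and `e^{σ²(1-η)²/2}`, whose
ratio is `e^{σ²(2η-1)/2}`.
-/

open MeasureTheory ProbabilityTheory Real

section IndependentGaussianFactor

variable {Ω 𝓧 : Type*} [MeasurableSpace Ω] [MeasurableSpace 𝓧] {μ : Measure Ω}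
  {X : Ω → 𝓧} {ε : Ω → ℝ} {v : NNReal}

lemma integrable_exp_mul_of_map_eq_gaussianReal [NeZero μ] {m : ℝ}
    (hε : μ.map ε = gaussianReal m v) (t : ℝ) : Integrable (fun ω ↦ exp (t * ε ω)) μ := by
  rw [← mgf_pos_iff, mgf_gaussianReal hε]
  exact exp_pos _

lemma ProbabilityTheory.IndepFun.integral_comp_mul_exp (hXε : IndepFun X ε μ)
    (hX : AEMeasurable X μ) (hε : μ.map ε = gaussianReal 0 v) {f : 𝓧 → ℝ} (hf : Measurable f)
    (t : ℝ) :
    ∫ ω, f (X ω) * exp (t * ε ω) ∂μ = (∫ ω, f (X ω) ∂μ) * exp (v * t ^ 2 / 2) := by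
  have hε_meas : AEMeasurable ε μ := aemeasurable_of_map_neZero (by rw [hε]; infer_instance)
  rw [hXε.integral_fun_comp_mul_comp hX hε_meas hf.aestronglyMeasurable
    (measurable_const_mul t).exp.aestronglyMeasurable, ← zero_add (v * t ^ 2 / 2 : ℝ),
    ← zero_mul t, ← mgf_gaussianReal hε, mgf]

lemma ProbabilityTheory.IndepFun.integrable_comp_mul_exp [NeZero μ] (hXε : IndepFun X ε μ)
    (hε : μ.map ε = gaussianReal 0 v) {f : 𝓧 → ℝ} (hf : Measurable f)
    (hfX : Integrable (fun ω ↦ f (X ω)) μ) (t : ℝ) :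
    Integrable (fun ω ↦ f (X ω) * exp (t * ε ω)) μ :=
  (hXε.comp hf (measurable_const_mul t).exp).integrable_mul hfX
    (integrable_exp_mul_of_map_eq_gaussianReal hε t)

end IndependentGaussianFactor

lemma mul_exp_rpow {x : ℝ} (hx : 0 < x) (y s : ℝ) : (x * exp y) ^ s = x ^ s * exp (s * y) := by
  rw [mul_rpow hx.le (exp_pos y).le, ← exp_mul, mul_comm y]

-- `s`, `m`, `e` play the roles of `Var λ`, `E λ` and `e^{σ²}`.
lemma corr_cv_ratio_eq {ρ CV s m e : ℝ} (hs : 0 < s) (he : 1 ≤ e)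
    (hρ : ρ ^ 2 = e * s / ((s + m ^ 2) * e ^ 2 - m ^ 2 * e)) (hCV : CV ^ 2 = s / m ^ 2) :
    (1 + ρ ^ 2 * (CV ^ 2)⁻¹) / (ρ ^ 2 * (1 + (CV ^ 2)⁻¹)) = e := by
  have hD : 0 < e * s + m ^ 2 * (e - 1) := by
    have := mul_nonneg (sq_nonneg m) (sub_nonneg.2 he)
    nlinarith
  have hρ' : ρ ^ 2 = s / (e * s + m ^ 2 * (e - 1)) := by
    rw [hρ, show (s + m ^ 2) * e ^ 2 - m ^ 2 * e = e * (e * s + m ^ 2 * (e - 1)) by ring,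
      mul_div_mul_left _ _ (by positivity : e ≠ 0)]
  rw [hCV, inv_div, hρ']
  generalize hDdef : e * s + m ^ 2 * (e - 1) = D at hD ⊢
  field_simp
  linear_combination -hDdef

namespace LognormalError

variable {Ω : Type*} [MeasurableSpace Ω] {μ : Measure Ω} {lam ε : Ω → ℝ} {v : NNReal}

lemma integral_mul_exp (hindep : IndepFun lam ε μ) (hlam : AEMeasurable lam μ)
    (hε : μ.map ε = gaussianReal 0 v) :
    ∫ ω, lam ω * exp (ε ω) ∂μ = (∫ ω, lam ω ∂μ) * exp (v / 2) := by
  simpa using hindep.integral_comp_mul_exp hlam hε measurable_id 1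

lemma integral_mul_exp_mul_self (hindep : IndepFun lam ε μ) (hlam : AEMeasurable lam μ)
    (hε : μ.map ε = gaussianReal 0 v) :
    ∫ ω, lam ω * exp (ε ω) * lam ω ∂μ = (∫ ω, lam ω ^ 2 ∂μ) * exp (v / 2) := by
  have := hindep.integral_comp_mul_exp hlam hε (f := fun x ↦ x ^ 2) (by fun_prop) 1
  simp only [one_pow, mul_one, one_mul] at this
  rw [← this]
  congr 1 with ω
  ring

lemma integral_mul_exp_sq (hindep : IndepFun lam ε μ) (hlam : AEMeasurable lam μ)
    (hε : μ.map ε = gaussianReal 0 v) :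
    ∫ ω, (lam ω * exp (ε ω)) ^ 2 ∂μ = (∫ ω, lam ω ^ 2 ∂μ) * exp v ^ 2 := by
  have := hindep.integral_comp_mul_exp hlam hε (f := fun x ↦ x ^ 2) (by fun_prop) 2
  simp only [mul_pow, ← exp_nat_mul] at this ⊢
  convert this using 4 <;> push_cast <;> ring

lemma memLp_two_mul_exp [NeZero μ] (hindep : IndepFun lam ε μ) (hlam : MemLp lam 2 μ)
    (hε : μ.map ε = gaussianReal 0 v) : MemLp (fun ω ↦ lam ω * exp (ε ω)) 2 μ := by
  have hε_meas : AEMeasurable ε μ := aemeasurable_of_map_neZero (by rw [hε]; infer_instance)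
  refine (memLp_two_iff_integrable_sq
    (hlam.aestronglyMeasurable.mul hε_meas.exp.aestronglyMeasurable)).2 ?_
  have := hindep.integrable_comp_mul_exp hε (f := fun x ↦ x ^ 2) (by fun_prop)
    ((memLp_two_iff_integrable_sq hlam.aestronglyMeasurable).1 hlam) 2
  refine this.congr (.of_forall fun ω ↦ ?_)
  simp only [Pi.mul_apply, mul_pow, ← exp_nat_mul]
  push_cast
  ring_nf

lemma variance_mul_exp [IsProbabilityMeasure μ] (hindep : IndepFun lam ε μ)
    (hlam : MemLp lam 2 μ) (hε : μ.map ε = gaussianReal 0 v) :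
    variance (fun ω ↦ lam ω * exp (ε ω)) μ
      = (variance lam μ + (∫ ω, lam ω ∂μ) ^ 2) * exp v ^ 2 - (∫ ω, lam ω ∂μ) ^ 2 * exp v := by
  rw [variance_eq_sub (memLp_two_mul_exp hindep hlam hε), variance_eq_sub hlam]
  simp only [Pi.pow_apply]
  rw [integral_mul_exp_sq hindep hlam.aemeasurable hε,
    integral_mul_exp hindep hlam.aemeasurable hε, mul_pow, sq (exp (v / 2)), ← exp_add,
    add_halves]
  ring

lemma covariance_mul_exp_self [IsProbabilityMeasure μ] (hindep : IndepFun lam ε μ)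
    (hlam : MemLp lam 2 μ) (hε : μ.map ε = gaussianReal 0 v) :
    (∫ ω, lam ω * exp (ε ω) * lam ω ∂μ) - (∫ ω, lam ω * exp (ε ω) ∂μ) * ∫ ω, lam ω ∂μ
      = variance lam μ * exp (v / 2) := by
  rw [integral_mul_exp_mul_self hindep hlam.aemeasurable hε,
    integral_mul_exp hindep hlam.aemeasurable hε, variance_eq_sub hlam]
  simp only [Pi.pow_apply]
  ring

lemma sq_corr_mul_exp [IsProbabilityMeasure μ] (hindep : IndepFun lam ε μ)
    (hlam : MemLp lam 2 μ) (hε : μ.map ε = gaussianReal 0 v) :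
    (((∫ ω, lam ω * exp (ε ω) * lam ω ∂μ) - (∫ ω, lam ω * exp (ε ω) ∂μ) * ∫ ω, lam ω ∂μ)
        / (√(variance (fun ω ↦ lam ω * exp (ε ω)) μ) * √(variance lam μ))) ^ 2
      = exp v * variance lam μ / ((variance lam μ + (∫ ω, lam ω ∂μ) ^ 2) * exp v ^ 2
          - (∫ ω, lam ω ∂μ) ^ 2 * exp v) := by
  rw [covariance_mul_exp_self hindep hlam hε, div_pow, mul_pow, mul_pow,
    sq_sqrt (variance_nonneg _ _), sq_sqrt (variance_nonneg _ _),
    variance_mul_exp hindep hlam hε, sq (exp (v / 2)), ← exp_add, add_halves]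
  by_cases h : variance lam μ = 0
  · simp [h]
  · field_simp

lemma loss_ratio_mul_exp {M K η : ℝ} (hindep : IndepFun lam ε μ) (hlam : AEMeasurable lam μ)
    (hε : μ.map ε = gaussianReal 0 v) (hpos : ∀ᵐ ω ∂μ, 0 < lam ω) (hM : 0 < M) (hK : K ≠ 0)
    (hJ : ∫ ω, lam ω ^ (1 - η) ∂μ ≠ 0) :
    (∫ ω, lam ω * (K * (M * (lam ω * exp (ε ω))) ^ (-η)) ∂μ)
        / ∫ ω, M * (lam ω * exp (ε ω)) * (K * (M * (lam ω * exp (ε ω))) ^ (-η)) ∂μ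
      = 1 / M * exp (v * (2 * η - 1) / 2) := by
  have hnum : ∫ ω, lam ω * (K * (M * (lam ω * exp (ε ω))) ^ (-η)) ∂μ
      = K * M ^ (-η) * ((∫ ω, lam ω ^ (1 - η) ∂μ) * exp (v * (-η) ^ 2 / 2)) := by
    rw [← hindep.integral_comp_mul_exp hlam hε (f := fun x ↦ x ^ (1 - η)) (by fun_prop),
      ← integral_const_mul]
    refine integral_congr_ae (hpos.mono fun ω hω ↦ ?_)
    beta_reduce
    rw [mul_rpow hM.le (by positivity), mul_exp_rpow hω, sub_eq_add_neg, rpow_add hω, rpow_one]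
    ring
  have hden : ∫ ω, M * (lam ω * exp (ε ω)) * (K * (M * (lam ω * exp (ε ω))) ^ (-η)) ∂μ
      = K * M ^ (1 - η) * ((∫ ω, lam ω ^ (1 - η) ∂μ) * exp (v * (1 - η) ^ 2 / 2)) := by
    rw [← hindep.integral_comp_mul_exp hlam hε (f := fun x ↦ x ^ (1 - η)) (by fun_prop),
      ← integral_const_mul]
    refine integral_congr_ae (hpos.mono fun ω hω ↦ ?_)
    beta_reduce
    rw [mul_rpow hM.le (by positivity), mul_exp_rpow hω, sub_eq_add_neg, rpow_add hω,
      rpow_add hM, rpow_one, rpow_one, add_mul, one_mul, exp_add]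
    ring
  have hexp : exp (v * (-η) ^ 2 / 2) = exp (v * (2 * η - 1) / 2) * exp (v * (1 - η) ^ 2 / 2) := by
    rw [← exp_add]
    ring_nf
  rw [hnum, hden, hexp, rpow_sub hM, rpow_neg hM.le, rpow_one]
  field_simp

end LognormalError

theorem core_loss_ratio_formula_general
    {Ω : Type*} [MeasurableSpace Ω] (μ : Measure Ω) [IsProbabilityMeasure μ]
    (lam ε : Ω → ℝ) (v : NNReal) (M K η : ℝ)
    (hM : 0 < M) (hK : 0 < K)
    (hlam_meas : Measurable lam)
    (hlam_pos : ∀ᵐ ω ∂μ, 0 < lam ω)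
    (hlam_sq : Integrable (fun ω => (lam ω) ^ 2) μ)
    (hvar_pos : 0 < variance lam μ)
    (hmom_pos : 0 < ∫ ω, lam ω ^ (1 - η) ∂μ)
    (hε_law : Measure.map ε μ = gaussianReal 0 v)
    (hindep : IndepFun lam ε μ)
    (lamHat p : Ω → ℝ)
    (hlamHat : lamHat = fun ω => lam ω * Real.exp (ε ω))
    (hp : p = fun ω => M * lamHat ω)
    (ρ : ℝ)
    (hρ : ρ = ((∫ ω, lamHat ω * lam ω ∂μ) - (∫ ω, lamHat ω ∂μ) * (∫ ω, lam ω ∂μ))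
        / (Real.sqrt (variance lamHat μ) * Real.sqrt (variance lam μ)))
    (CV : ℝ) (hCV : CV = Real.sqrt (variance lam μ) / (∫ ω, lam ω ∂μ))
    (LR : ℝ)
    (hLR : LR = (∫ ω, lam ω * (K * p ω ^ (-η)) ∂μ) / (∫ ω, p ω * (K * p ω ^ (-η)) ∂μ)) :
    LR = (1 / M) * ((1 + ρ ^ 2 * (CV ^ 2)⁻¹) / (ρ ^ 2 * (1 + (CV ^ 2)⁻¹)))
        ^ ((2 * η - 1) / 2) := by
  subst hlamHat hp hLR hρ hCV
  beta_reduce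
  have hlam : MemLp lam 2 μ :=
    (memLp_two_iff_integrable_sq hlam_meas.aestronglyMeasurable).2 hlam_sq
  have hCV : (√(variance lam μ) / ∫ ω, lam ω ∂μ) ^ 2 = variance lam μ / (∫ ω, lam ω ∂μ) ^ 2 := by
    rw [div_pow, sq_sqrt (variance_nonneg lam μ)]
  have hbase := corr_cv_ratio_eq hvar_pos (one_le_exp v.coe_nonneg)
    (LognormalError.sq_corr_mul_exp hindep hlam hε_law) hCV
  rw [LognormalError.loss_ratio_mul_exp hindep hlam_meas.aemeasurable hε_law hlam_pos hM hK.ne'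
    hmom_pos.ne', hbase, ← exp_mul, mul_div_assoc]

/-- Core loss ratio formula: under the lognormal-error pricing model with margin `M`,
power-law demand with elasticity `η`, model correlation `ρ = Corr(λ̂, λ)` and coefficient of
variation `CV`, the expected loss ratio satisfies
`LR = (1/M)·((1 + ρ²·CV⁻²)/(ρ²·(1 + CV⁻²)))^{(2η−1)/2}`. -/
theorem core_loss_ratio_formula
    {Ω : Type*} [MeasurableSpace Ω] (μ : Measure Ω) [IsProbabilityMeasure μ]
    (lam ε : Ω → ℝ) (v : NNReal) (M K η : ℝ)
    (hM : 0 < M) (hK : 0 < K) (hη : 0 < η)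
    (hlam_meas : Measurable lam) (hε_meas : Measurable ε)
    (hlam_pos : ∀ᵐ ω ∂μ, 0 < lam ω)
    (hlam_sq : Integrable (fun ω => (lam ω) ^ 2) μ)
    (hvar_pos : 0 < variance lam μ)
    (hmom : Integrable (fun ω => lam ω ^ (1 - η)) μ)
    (hmom_pos : 0 < ∫ ω, lam ω ^ (1 - η) ∂μ)
    (hε_law : Measure.map ε μ = gaussianReal 0 v)
    (hindep : IndepFun lam ε μ)
    (lamHat p : Ω → ℝ)
    (hlamHat : lamHat = fun ω => lam ω * Real.exp (ε ω))
    (hp : p = fun ω => M * lamHat ω)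
    (ρ : ℝ)
    (hρ : ρ = ((∫ ω, lamHat ω * lam ω ∂μ) - (∫ ω, lamHat ω ∂μ) * (∫ ω, lam ω ∂μ))
        / (Real.sqrt (variance lamHat μ) * Real.sqrt (variance lam μ)))
    (CV : ℝ) (hCV : CV = Real.sqrt (variance lam μ) / (∫ ω, lam ω ∂μ))
    (LR : ℝ)
    (hLR : LR = (∫ ω, lam ω * (K * p ω ^ (-η)) ∂μ) / (∫ ω, p ω * (K * p ω ^ (-η)) ∂μ)) :
    LR = (1 / M) * ((1 + ρ ^ 2 * (CV ^ 2)⁻¹) / (ρ ^ 2 * (1 + (CV ^ 2)⁻¹)))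
        ^ ((2 * η - 1) / 2) :=
  core_loss_ratio_formula_general μ lam ε v M K η hM hK hlam_meas hlam_pos hlam_sq hvar_pos hmom_pos
    hε_law hindep lamHat p hlamHat hp ρ hρ CV hCV LR hLR
end

section
/- For correlations 0 < ρ_old ≤ ρ_new ≤ 1, elasticity η > 1/2, and c = CV⁻² > 0, the loss ratio ratio satisfies LR_new/LR_old = ((ρ_old² + ρ_new²ρ_old²c)/(ρ_new² + ρ_new²ρ_old²c))^{(2η−1)/2} ≤ 1, with equality iff ρ_old = ρ_new. -/
/-- Model improvement formula: for correlations `0 < ρ_old ≤ ρ_new ≤ 1`, elasticity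
`η > 1/2`, and `c = CV⁻² > 0`, the loss ratio ratio satisfies
`LR_new/LR_old = ((ρ_old² + ρ_new²ρ_old²c)/(ρ_new² + ρ_new²ρ_old²c))^{(2η−1)/2} ≤ 1`,
with equality iff `ρ_old = ρ_new`. -/
theorem loss_ratio_improvement (M c η ρo ρn : ℝ) (hM : 0 < M) (hc : 0 < c)
    (hη : 1 / 2 < η) (hρo : 0 < ρo) (hρon : ρo ≤ ρn) (hρn : ρn ≤ 1)
    (LR : ℝ → ℝ)
    (hLR : LR = fun ρ => (1 / M) * ((1 + ρ ^ 2 * c) / (ρ ^ 2 * (1 + c))) ^ ((2 * η - 1) / 2)) :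
    LR ρn / LR ρo
        = ((ρo ^ 2 + ρn ^ 2 * ρo ^ 2 * c) / (ρn ^ 2 + ρn ^ 2 * ρo ^ 2 * c)) ^ ((2 * η - 1) / 2)
      ∧ LR ρn / LR ρo ≤ 1
      ∧ (LR ρn / LR ρo = 1 ↔ ρo = ρn) := by
  have hρn0 : 0 < ρn := lt_of_lt_of_le hρo hρon
  set e : ℝ := (2 * η - 1) / 2 with he
  have he0 : 0 < e := by
    have h1 : (0:ℝ) < 2 * η - 1 := by linarith
    positivity
  have hρo2 : 0 < ρo ^ 2 := by positivity
  have hρn2 : 0 < ρn ^ 2 := by positivity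
  have hAn : 0 < (1 + ρn ^ 2 * c) / (ρn ^ 2 * (1 + c)) := by positivity
  have hAo : 0 < (1 + ρo ^ 2 * c) / (ρo ^ 2 * (1 + c)) := by positivity
  have hBden : 0 < ρn ^ 2 + ρn ^ 2 * ρo ^ 2 * c := by positivity
  have hBnum : 0 < ρo ^ 2 + ρn ^ 2 * ρo ^ 2 * c := by positivity
  set B : ℝ := (ρo ^ 2 + ρn ^ 2 * ρo ^ 2 * c) / (ρn ^ 2 + ρn ^ 2 * ρo ^ 2 * c) with hB
  have hB0 : 0 < B := div_pos hBnum hBden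
  have hdiv : (1 + ρn ^ 2 * c) / (ρn ^ 2 * (1 + c))
      / ((1 + ρo ^ 2 * c) / (ρo ^ 2 * (1 + c))) = B := by
    rw [hB]
    field_simp
  have hmain : LR ρn / LR ρo = B ^ e := by
    rw [hLR]
    simp only
    rw [mul_div_mul_left _ _ (one_div_ne_zero hM.ne')]
    rw [← Real.div_rpow hAn.le hAo.le, hdiv]
  refine ⟨hmain, ?_, ?_⟩
  · rw [hmain]
    apply Real.rpow_le_one hB0.le _ he0.le
    rw [hB, div_le_one hBden]
    have : ρo ^ 2 ≤ ρn ^ 2 := by nlinarith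
    linarith
  · rw [hmain]
    constructor
    · intro h
      by_contra hne
      have hlt : ρo < ρn := lt_of_le_of_ne hρon hne
      have hBlt : B < 1 := by
        rw [hB, div_lt_one hBden]
        have : ρo ^ 2 < ρn ^ 2 := by nlinarith
        linarith
      have := Real.rpow_lt_one hB0.le hBlt he0
      linarith
    · intro h
      subst h
      have hB1 : B = 1 := by
        rw [hB]
        field_simp
      rw [hB1, Real.one_rpow]
end

section
/- Fix p > 0, c > 0, η > 1/2. Define the relative loss ratio improvement g(ρ) = 1 − (((1+p)^{−2} + ρ²c)/(1 + ρ²c))^{(2η−1)/2} for ρ ∈ (0, 1/(1+p)). Then g is strictly decreasing in ρ. -/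
/-- Diminishing marginal returns (relative version): for a fixed fractional improvement
`p > 0` in correlation, the relative loss ratio improvement
`g(ρ) = 1 − (((1+p)^{−2} + ρ²c)/(1 + ρ²c))^{(2η−1)/2}` is strictly decreasing in
`ρ` on `(0, 1/(1+p))`. -/
theorem relative_improvement_strictAntiOn (p c η : ℝ) (hp : 0 < p) (hc : 0 < c)
    (hη : 1 / 2 < η) :
    StrictAntiOn
      (fun ρ : ℝ =>
        1 - (((1 + p) ^ (-2 : ℝ) + ρ ^ 2 * c) / (1 + ρ ^ 2 * c)) ^ ((2 * η - 1) / 2))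
      (Set.Ioo 0 (1 / (1 + p))) := by
  intro x hx y hy hxy
  set a : ℝ := (1 + p) ^ (-2 : ℝ) with ha
  have h1p : (1 : ℝ) < 1 + p := by linarith
  have ha0 : 0 < a := Real.rpow_pos_of_pos (by linarith) _
  have ha1 : a < 1 := Real.rpow_lt_one_of_one_lt_of_neg h1p (by norm_num)
  have hx0 : 0 < x := hx.1
  have hy0 : 0 < y := lt_trans hx0 hxy
  have hdx : 0 < 1 + x ^ 2 * c := by positivity
  have hdy : 0 < 1 + y ^ 2 * c := by positivity
  have hnum : 0 ≤ a + x ^ 2 * c := by positivity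
  have hlt : (a + x ^ 2 * c) / (1 + x ^ 2 * c) < (a + y ^ 2 * c) / (1 + y ^ 2 * c) := by
    rw [div_lt_div_iff₀ hdx hdy]
    have hsq : x ^ 2 < y ^ 2 := by nlinarith
    nlinarith [mul_pos (mul_pos (sub_pos.mpr hsq) hc) (sub_pos.mpr ha1)]
  have he : 0 < (2 * η - 1) / 2 := by linarith
  have := Real.rpow_lt_rpow (by positivity) hlt he
  simp only
  linarith
end

section
/- Fix p > 0, c > 0, η > 1/2, M > 0. Define the absolute loss ratio improvement h(ρ) = LR(ρ) − LR((1+p)ρ) for ρ ∈ (0, 1/(1+p)), where LR(ρ) = (1/M)·((1 + ρ²c)/(ρ²(1+c)))^{(2η−1)/2}. Then h is strictly decreasing in ρ. -/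
/-! Put `q = 1 + p` and `F = LR`. The derivative of `h(ρ) = F ρ - F (qρ)` is
`(ρ F'(ρ) - qρ F'(qρ)) / ρ`, so `h` decreases as soon as `ρ F'(ρ)` is strictly increasing.
For `F = R^E / M` with `R ρ = (1 + ρ²c)/(ρ²(1+c))` one has `ρ R'(ρ) = -2 (R ρ - d)`, where
`d = c/(1+c)`, hence `ρ F'(ρ) = -(2E/M) R^(E-1) (R - d)`.
Now `a ↦ a^(E-1) (a - d) = a^E (1 - d/a)` increases on `(d, ∞)`,
and `R` decreases from `∞` to `d`. -/

open Set

theorem strictAntiOn_sub_comp_mul {F G : ℝ → ℝ} {q : ℝ} (hq : 1 < q)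
    (hF : ∀ x > 0, HasDerivAt F (G x / x) x) (hG : StrictMonoOn G (Ioi 0)) :
    StrictAntiOn (fun x => F x - F (q * x)) (Ioi 0) := by
  have hq0 : 0 < q := one_pos.trans hq
  have hderiv : ∀ x > 0, HasDerivAt (fun x => F x - F (q * x)) ((G x - G (q * x)) / x) x := by
    intro x hx
    have hFq := (hF (q * x) (mul_pos hq0 hx)).comp x ((hasDerivAt_id x).const_mul q)
    refine ((hF x hx).sub hFq).congr_deriv ?_
    field_simp
  refine strictAntiOn_of_hasDerivWithinAt_neg (f' := fun x => (G x - G (q * x)) / x) (convex_Ioi 0)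
    (fun x hx => (hderiv x hx).continuousAt.continuousWithinAt) (fun x hx => ?_) (fun x hx => ?_)
  · rw [interior_Ioi] at hx ⊢
    exact (hderiv x hx).hasDerivWithinAt
  · rw [interior_Ioi] at hx
    have hlt : x < q * x := lt_mul_left hx hq
    exact div_neg_of_neg_of_pos (sub_neg.2 (hG hx (hx.trans hlt) hlt)) hx

theorem strictMonoOn_rpow_sub_one_mul_sub {E d : ℝ} (hE : 0 < E) (hd : 0 ≤ d) :
    StrictMonoOn (fun a : ℝ => a ^ (E - 1) * (a - d)) (Ioi d) := by
  intro a ha b hb hab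
  have ha0 : 0 < a := hd.trans_lt ha
  have hb0 : 0 < b := ha0.trans hab
  have hfactor : ∀ t : ℝ, 0 < t → t ^ (E - 1) * (t - d) = t ^ E * (1 - d / t) := by
    intro t ht
    rw [Real.rpow_sub_one ht.ne']
    field_simp
  simp only [hfactor a ha0, hfactor b hb0]
  refine mul_lt_mul (Real.rpow_lt_rpow ha0.le hab hE) ?_ ?_ (by positivity)
  · linarith [div_le_div_of_nonneg_left hd ha0 hab.le]
  · rw [sub_pos, div_lt_one ha0]
    exact ha

section CorrRatio

variable {c : ℝ}

/-- `LR ρ = (1/M) * corrRatio c ρ ^ ((2η - 1)/2)`. -/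
noncomputable def corrRatio (c ρ : ℝ) : ℝ := (1 + ρ ^ 2 * c) / (ρ ^ 2 * (1 + c))

theorem corrRatio_sub_eq (hc : 1 + c ≠ 0) {x : ℝ} (hx : x ≠ 0) :
    corrRatio c x - c / (1 + c) = 1 / (x ^ 2 * (1 + c)) := by
  unfold corrRatio
  field_simp
  ring

theorem hasDerivAt_corrRatio (hc : 1 + c ≠ 0) {x : ℝ} (hx : x ≠ 0) :
    HasDerivAt (corrRatio c) (-2 * (corrRatio c x - c / (1 + c)) / x) x := by
  have hnum : HasDerivAt (fun ρ : ℝ => 1 + ρ ^ 2 * c) (2 * x * c) x := by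
    simpa using ((hasDerivAt_pow 2 x).mul_const c).const_add 1
  have hden : HasDerivAt (fun ρ : ℝ => ρ ^ 2 * (1 + c)) (2 * x * (1 + c)) x := by
    simpa using (hasDerivAt_pow 2 x).mul_const (1 + c)
  refine (hnum.div hden (mul_ne_zero (pow_ne_zero 2 hx) hc)).congr_deriv ?_
  rw [corrRatio_sub_eq hc hx]
  field_simp
  ring

theorem div_one_add_lt_corrRatio (hc : 0 < 1 + c) {x : ℝ} (hx : 0 < x) :
    c / (1 + c) < corrRatio c x := by
  have hsub := corrRatio_sub_eq hc.ne' hx.ne'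
  have hpos : 0 < 1 / (x ^ 2 * (1 + c)) := by positivity
  linarith

theorem strictAntiOn_corrRatio (hc : 0 < 1 + c) : StrictAntiOn (corrRatio c) (Ioi 0) := by
  intro a ha b hb hab
  have hsub := corrRatio_sub_eq hc.ne' (ne_of_gt ha)
  have hsub' := corrRatio_sub_eq hc.ne' (ne_of_gt hb)
  have hlt : 1 / (b ^ 2 * (1 + c)) < 1 / (a ^ 2 * (1 + c)) := by
    have ha0 : (0 : ℝ) < a := ha
    gcongr
  linarith

theorem hasDerivAt_const_mul_corrRatio_rpow (hc : 0 ≤ c) (K E : ℝ) {x : ℝ} (hx : 0 < x) :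
    HasDerivAt (fun ρ => K * corrRatio c ρ ^ E)
      (-(2 * K * E) * (corrRatio c x ^ (E - 1) * (corrRatio c x - c / (1 + c))) / x) x := by
  have hc1 : 0 < 1 + c := by linarith
  have hpos : 0 < corrRatio c x :=
    (div_nonneg hc hc1.le).trans_lt (div_one_add_lt_corrRatio hc1 hx)
  have hR := (hasDerivAt_corrRatio hc1.ne' hx.ne').rpow_const (p := E) (Or.inl hpos.ne')
  exact (hR.const_mul K).congr_deriv (by ring)

end CorrRatio

/-- Diminishing marginal returns (absolute version): for a fixed fractional improvement
`p > 0` in correlation, the absolute loss ratio improvement `h(ρ) = LR(ρ) − LR((1+p)ρ)`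
is strictly decreasing in `ρ` on `(0, 1/(1+p))`, where
`LR(ρ) = (1/M)·((1 + ρ²c)/(ρ²(1+c)))^{(2η−1)/2}`. -/
theorem absolute_improvement_strictAntiOn (p c η M : ℝ) (hp : 0 < p) (hc : 0 < c)
    (hη : 1 / 2 < η) (hM : 0 < M)
    (LR : ℝ → ℝ)
    (hLR : LR = fun ρ => (1 / M) * ((1 + ρ ^ 2 * c) / (ρ ^ 2 * (1 + c))) ^ ((2 * η - 1) / 2)) :
    StrictAntiOn (fun ρ : ℝ => LR ρ - LR ((1 + p) * ρ)) (Set.Ioo 0 (1 / (1 + p))) := by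
  subst hLR
  set E := (2 * η - 1) / 2 with hE_def
  have hE : 0 < E := by rw [hE_def]; linarith
  have hc1 : 0 < 1 + c := by linarith
  have hG : StrictMonoOn
      (fun x => -(2 * (1 / M) * E) * (corrRatio c x ^ (E - 1) * (corrRatio c x - c / (1 + c))))
      (Ioi 0) := by
    have hanti := (strictMonoOn_rpow_sub_one_mul_sub hE (by positivity)).comp_strictAntiOn
      (strictAntiOn_corrRatio hc1) (fun x hx => div_one_add_lt_corrRatio hc1 hx)
    intro a ha b hb hab
    exact mul_lt_mul_of_neg_left (hanti ha hb hab) (by simp only [neg_lt_zero]; positivity)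
  exact (strictAntiOn_sub_comp_mul (by linarith)
    (fun x hx => hasDerivAt_const_mul_corrRatio_rpow hc.le (1 / M) E hx) hG).mono fun x hx => hx.1
end

section
/- For σ² ≥ 0 and c > 0, the function ρ(σ²) = e^{−σ²/2}/sqrt((1 + c) − c·e^{−σ²}) takes values in (0, 1], equals 1 iff σ² = 0, and is strictly decreasing in σ². -/
/-- For `c > 0`, the correlation `ρ(σ²) = e^{−σ²/2}/sqrt((1 + c) − c·e^{−σ²})` as a function
of the error variance `σ² ≥ 0` takes values in `(0, 1]`, equals `1` iff `σ² = 0`, and is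
strictly decreasing in `σ²`. -/
theorem corr_of_sigmaSq_properties (c : ℝ) (hc : 0 < c)
    (ρ : ℝ → ℝ)
    (hρ : ρ = fun v => Real.exp (-v / 2) / Real.sqrt ((1 + c) - c * Real.exp (-v))) :
    (∀ v : ℝ, 0 ≤ v → ρ v ∈ Set.Ioc (0 : ℝ) 1)
      ∧ (∀ v : ℝ, 0 ≤ v → (ρ v = 1 ↔ v = 0))
      ∧ StrictAntiOn ρ (Set.Ici 0) := by
  set g : ℝ → ℝ := fun v => (1 + c) * Real.exp v - c with hg
  have hgone : ∀ v : ℝ, 0 ≤ v → 1 ≤ g v := by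
    intro v hv
    have h1 : (1:ℝ) ≤ Real.exp v := Real.one_le_exp hv
    simp only [hg]
    nlinarith
  have key : ∀ v : ℝ, ρ v = 1 / Real.sqrt (g v) := by
    intro v
    have hmul : Real.exp (-v) * Real.exp v = 1 := by
      rw [← Real.exp_add]; simp
    have hD : (1 + c) - c * Real.exp (-v) = Real.exp (-v) * g v := by
      simp only [hg]
      linear_combination (-(1 + c)) * hmul
    have hE : Real.exp (-v / 2) = Real.sqrt (Real.exp (-v)) := by
      have h2 : Real.exp (-v) = Real.exp (-v/2) * Real.exp (-v/2) := by
        rw [← Real.exp_add]; ring_nf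
      rw [h2, Real.sqrt_mul_self (Real.exp_nonneg _)]
    have hEpos : 0 < Real.sqrt (Real.exp (-v)) := Real.sqrt_pos.mpr (Real.exp_pos _)
    rw [hρ]
    simp only
    rw [hD, Real.sqrt_mul (Real.exp_nonneg _), hE,
      div_mul_cancel_left₀ hEpos.ne', one_div]
  have hsqrt_ge : ∀ v : ℝ, 0 ≤ v → 1 ≤ Real.sqrt (g v) := by
    intro v hv
    have := hgone v hv
    nlinarith [Real.sq_sqrt (by linarith : (0:ℝ) ≤ g v), Real.sqrt_nonneg (g v)]
  have hmem : ∀ v : ℝ, 0 ≤ v → ρ v ∈ Set.Ioc (0 : ℝ) 1 := by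
    intro v hv
    have h1 := hsqrt_ge v hv
    rw [key v]
    constructor
    · positivity
    · rw [div_le_one (by linarith)]; linarith
  refine ⟨hmem, ?_, ?_⟩
  · intro v hv
    constructor
    · intro h
      rw [key v] at h
      have h1 := hsqrt_ge v hv
      have hs : Real.sqrt (g v) = 1 := by
        field_simp at h
        linarith [h]
      have hgv : g v = 1 := by
        have := Real.sq_sqrt (by linarith [hgone v hv] : (0:ℝ) ≤ g v)
        nlinarith
      have hev : Real.exp v = 1 := by
        simp only [hg] at hgv
        nlinarith
      have hev0 : Real.exp v = Real.exp 0 := by rw [hev, Real.exp_zero]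
      exact Real.exp_eq_exp.mp hev0
    · intro h
      subst h
      rw [key 0]
      simp only [hg]
      norm_num
  · intro a ha b hb hab
    simp only [Set.mem_Ici] at ha hb
    rw [key a, key b]
    have hgab : g a < g b := by
      have : Real.exp a < Real.exp b := Real.exp_lt_exp.mpr hab
      simp only [hg]
      nlinarith
    have h1a := hsqrt_ge a ha
    have hsab : Real.sqrt (g a) < Real.sqrt (g b) :=
      Real.sqrt_lt_sqrt (by linarith [hgone a ha]) hgab
    apply one_div_lt_one_div_of_lt (by linarith) hsab
end

section
/- For c > 0, η > 1/2, and 0 < ρ_f, ρ_s ≤ 1 with analogous constants c_f, c_s > 0, the two-component loss ratio (1/M)·((1+ρ_f²c_f)/(ρ_f²(1+c_f)))^{(2η−1)/2}·((1+ρ_s²c_s)/(ρ_s²(1+c_s)))^{(2η−1)/2} is strictly decreasing in each of ρ_f and ρ_s separately. -/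
private lemma base_pos {c x : ℝ} (hc : 0 < c) (hx : 0 < x) :
    0 < (1 + x ^ 2 * c) / (x ^ 2 * (1 + c)) :=
  div_pos (by positivity) (by positivity)

private lemma base_lt {c x y : ℝ} (hc : 0 < c) (hx : 0 < x) (hy : y ≤ 1) (hxy : x < y) :
    (1 + y ^ 2 * c) / (y ^ 2 * (1 + c)) < (1 + x ^ 2 * c) / (x ^ 2 * (1 + c)) := by
  have hy0 : 0 < y := hx.trans hxy
  rw [div_lt_div_iff₀ (by positivity) (by positivity)]
  have hx2 : x ^ 2 < y ^ 2 := by nlinarith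
  nlinarith

private lemma factor_lt {c x y p : ℝ} (hc : 0 < c) (hp : 0 < p)
    (hx : 0 < x) (hy : y ≤ 1) (hxy : x < y) :
    ((1 + y ^ 2 * c) / (y ^ 2 * (1 + c))) ^ p
      < ((1 + x ^ 2 * c) / (x ^ 2 * (1 + c))) ^ p :=
  Real.rpow_lt_rpow (le_of_lt (base_pos hc (hx.trans hxy))) (base_lt hc hx hy hxy) hp

/-- The two-component (frequency–severity) loss ratio
`(1/M)·((1+ρ_f²c_f)/(ρ_f²(1+c_f)))^{(2η−1)/2}·((1+ρ_s²c_s)/(ρ_s²(1+c_s)))^{(2η−1)/2}`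
is strictly decreasing in each of the component correlations `ρ_f` and `ρ_s` separately
on `(0, 1]`, for `M > 0`, `c_f, c_s > 0`, `η > 1/2`. -/
theorem two_component_loss_ratio_strictAnti (M cf cs η : ℝ) (hM : 0 < M)
    (hcf : 0 < cf) (hcs : 0 < cs) (hη : 1 / 2 < η)
    (LR2 : ℝ → ℝ → ℝ)
    (hLR2 : LR2 = fun ρf ρs =>
      (1 / M) * ((1 + ρf ^ 2 * cf) / (ρf ^ 2 * (1 + cf))) ^ ((2 * η - 1) / 2)
        * ((1 + ρs ^ 2 * cs) / (ρs ^ 2 * (1 + cs))) ^ ((2 * η - 1) / 2)) :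
    (∀ ρs ∈ Set.Ioc (0 : ℝ) 1, StrictAntiOn (fun ρf => LR2 ρf ρs) (Set.Ioc 0 1))
      ∧ (∀ ρf ∈ Set.Ioc (0 : ℝ) 1, StrictAntiOn (fun ρs => LR2 ρf ρs) (Set.Ioc 0 1)) := by
  subst hLR2
  have hp : 0 < (2 * η - 1) / 2 := by linarith
  constructor
  · intro ρs hρs x hx y hy hxy
    have hB : 0 < ((1 + ρs ^ 2 * cs) / (ρs ^ 2 * (1 + cs))) ^ ((2 * η - 1) / 2) :=
      Real.rpow_pos_of_pos (base_pos hcs hρs.1) _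
    have h := factor_lt hcf hp hx.1 hy.2 hxy
    have hM' : 0 < 1 / M := by positivity
    dsimp only
    nlinarith [mul_pos hM' hB]
  · intro ρf hρf x hx y hy hxy
    have hA : 0 < ((1 + ρf ^ 2 * cf) / (ρf ^ 2 * (1 + cf))) ^ ((2 * η - 1) / 2) :=
      Real.rpow_pos_of_pos (base_pos hcf hρf.1) _
    have h := factor_lt hcs hp hx.1 hy.2 hxy
    have hM' : 0 < 1 / M := by positivity
    dsimp only
    nlinarith [mul_pos hM' hA]
end

section
/- For fixed ρ ∈ (0,1) and η > 1/2, the Loss Ratio Error E_LR = ((1 + ρ²c)/(ρ²(1+c)))^{(2η−1)/2} − 1, viewed as a function of c = CV⁻² > 0, is strictly decreasing in c; equivalently, E_LR is strictly increasing in the coefficient of variation CV of true losses. -/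
/-- For fixed correlation `ρ ∈ (0,1)` and elasticity `η > 1/2`, the Loss Ratio Error
`E_LR(c) = ((1 + ρ²c)/(ρ²(1+c)))^{(2η−1)/2} − 1`, viewed as a function of the inverse
squared coefficient of variation `c > 0`, is strictly decreasing in `c` (equivalently,
strictly increasing in the coefficient of variation `CV`). -/
theorem loss_ratio_error_strictAnti_in_c (ρ η : ℝ) (hρ0 : 0 < ρ) (hρ1 : ρ < 1)
    (hη : 1 / 2 < η) :
    StrictAntiOn
      (fun c : ℝ => ((1 + ρ ^ 2 * c) / (ρ ^ 2 * (1 + c))) ^ ((2 * η - 1) / 2) - 1)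
      (Set.Ioi 0) := by
  intro a ha b hb hab
  simp only [Set.mem_Ioi] at ha hb
  have hρ2 : 0 < ρ ^ 2 := by positivity
  have hp : 0 < (2 * η - 1) / 2 := by linarith
  have hda : 0 < ρ ^ 2 * (1 + a) := by positivity
  have hdb : 0 < ρ ^ 2 * (1 + b) := by positivity
  have hna : 0 < 1 + ρ ^ 2 * a := by positivity
  have hb0 : (0:ℝ) ≤ (1 + ρ ^ 2 * b) / (ρ ^ 2 * (1 + b)) := by positivity
  have hlt : (1 + ρ ^ 2 * b) / (ρ ^ 2 * (1 + b)) < (1 + ρ ^ 2 * a) / (ρ ^ 2 * (1 + a)) := by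
    rw [div_lt_div_iff₀ hdb hda]
    have h1 : ρ ^ 2 < 1 := by nlinarith
    nlinarith [mul_pos hρ2 (mul_pos (sub_pos.2 hab) (sub_pos.2 h1))]
  have := Real.rpow_lt_rpow hb0 hlt hp
  simpa using sub_lt_sub_right this 1
end
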